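/- arXiv:2308.01181 — 2 statements merged into one kernel-verified Lean document; each statement's English description precedes it below -/
import Mathlib

section
/- Let A be a nonzero polynomial in F_2[x]. Then there exist a positive integer m and nonnegative integers p_1, p_2 with p_2 = p_1 + 2 such that for every k ≥ m: deg(A_{2k+1}) = p_1, deg(A_{2k}) = p_2, and a_{2k} = b_{2k} = 1. -/
open Polynomial Finset

/-- The polynomial `M = x^2 + x + 1` over `F_2`. -/
noncomputable def M : Polynomial (ZMod 2) := X ^ 2 + X + 1

/-- The odd part of a binary polynomial: `P` divided by `x^{val_x(P)} (x+1)^{val_{x+1}(P)}`. -/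
noncomputable def oddPart (P : Polynomial (ZMod 2)) : Polynomial (ZMod 2) :=
  P / (X ^ P.rootMultiplicity 0 * (X + 1) ^ P.rootMultiplicity 1)

/-- The Collatz sequence of a binary polynomial `A`:
`A_0 = A`, `A_{2k+1} = oddPart A_{2k}`, `A_{2k+2} = 1 + M * A_{2k+1}`. -/
noncomputable def collatz (A : Polynomial (ZMod 2)) : ℕ → Polynomial (ZMod 2)
  | 0 => A
  | n + 1 => if n % 2 = 0 then oddPart (collatz A n) else 1 + M * collatz A n

/-- `a_k`: the multiplicity of `x` in `A_k`. -/
noncomputable def aSeq (A : Polynomial (ZMod 2)) (k : ℕ) : ℕ :=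
  (collatz A k).rootMultiplicity 0

/-- `b_k`: the multiplicity of `x + 1` in `A_k`. -/
noncomputable def bSeq (A : Polynomial (ZMod 2)) (k : ℕ) : ℕ :=
  (collatz A k).rootMultiplicity 1

/-- The length `ℓ_A = m + 1`, where `m` is the least nonnegative integer
with `A_{2m+1} = 1`. -/
noncomputable def collatzLength (A : Polynomial (ZMod 2)) : ℕ :=
  sInf {m : ℕ | collatz A (2 * m + 1) = 1} + 1


/-! Write `d k = deg A_{2k+1}`. Since `A_{2k+1}` is odd and `M` has no root in `F_2`, the
polynomial `A_{2k+2} = 1 + M A_{2k+1}` vanishes at `0` and `1`, so `a_{2k+2}, b_{2k+2} ≥ 1` and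
`d (k+1) = d k + 2 - a_{2k+2} - b_{2k+2} ≤ d k`. A non-increasing sequence of naturals is eventually
constant, and once it is, `a_{2k} + b_{2k} = 2` forces `a_{2k} = b_{2k} = 1`. -/

section

variable {R : Type*} [Semiring R]

theorem monic_X_pow_mul_X_add_one_pow (m n : ℕ) : (X ^ m * (X + 1) ^ n : R[X]).Monic :=
  (monic_X.pow m).mul (by simpa using (monic_X_add_C (1 : R)).pow n)

theorem natDegree_X_pow_mul_X_add_one_pow [Nontrivial R] (m n : ℕ) :
    (X ^ m * (X + 1) ^ n : R[X]).natDegree = m + n := by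
  have h := natDegree_pow_X_add_C (R := R) n 1
  rw [map_one] at h
  rw [(monic_X.pow m).natDegree_mul (by simpa using (monic_X_add_C (1 : R)).pow n),
    natDegree_X_pow, h]

end

theorem pow_rootMultiplicity_mul_pow_rootMultiplicity_dvd {K : Type*} [Field K] {a b : K}
    (hab : a ≠ b) (P : K[X]) :
    (X - C a) ^ P.rootMultiplicity a * (X - C b) ^ P.rootMultiplicity b ∣ P :=
  (isCoprime_X_sub_C_of_isUnit_sub (sub_ne_zero.2 hab).isUnit).pow.mul_dvd
    (pow_rootMultiplicity_dvd P a) (pow_rootMultiplicity_dvd P b)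

theorem X_add_one_eq_X_sub_C_one {R : Type*} [Ring R] [CharP R 2] :
    (X + 1 : R[X]) = X - C 1 := by
  rw [map_one, sub_eq_add_neg, CharTwo.neg_eq]

theorem ZMod.eq_zero_or_eq_one : ∀ u : ZMod 2, u = 0 ∨ u = 1 := by
  decide

theorem mul_oddPart (P : (ZMod 2)[X]) :
    X ^ P.rootMultiplicity 0 * (X + 1) ^ P.rootMultiplicity 1 * oddPart P = P := by
  have hdvd := pow_rootMultiplicity_mul_pow_rootMultiplicity_dvd zero_ne_one P
  rw [map_zero, sub_zero, ← X_add_one_eq_X_sub_C_one] at hdvd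
  exact EuclideanDomain.mul_div_cancel' (monic_X_pow_mul_X_add_one_pow _ _).ne_zero hdvd

theorem oddPart_ne_zero {P : (ZMod 2)[X]} (hP : P ≠ 0) : oddPart P ≠ 0 := by
  intro h
  exact hP (by rw [← mul_oddPart P, h, mul_zero])

theorem eval_oddPart_ne_zero {P : (ZMod 2)[X]} (hP : P ≠ 0) (x : ZMod 2) :
    (oddPart P).eval x ≠ 0 := by
  intro hx
  have hmult : (X - C x) ^ P.rootMultiplicity x ∣
      X ^ P.rootMultiplicity 0 * (X + 1) ^ P.rootMultiplicity 1 := by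
    obtain rfl | rfl := ZMod.eq_zero_or_eq_one x
    · rw [map_zero, sub_zero]
      exact dvd_mul_right _ _
    · rw [← X_add_one_eq_X_sub_C_one]
      exact dvd_mul_left _ _
  refine pow_rootMultiplicity_not_dvd hP x ?_
  rw [pow_succ]
  exact (mul_dvd_mul hmult (dvd_iff_isRoot.2 hx)).trans (mul_oddPart P).dvd

theorem natDegree_eq_add_natDegree_oddPart {P : (ZMod 2)[X]} (hP : P ≠ 0) :
    P.natDegree = P.rootMultiplicity 0 + P.rootMultiplicity 1 + (oddPart P).natDegree := by
  conv_lhs => rw [← mul_oddPart P]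
  rw [(monic_X_pow_mul_X_add_one_pow _ _).natDegree_mul' (oddPart_ne_zero hP),
    natDegree_X_pow_mul_X_add_one_pow]

theorem natDegree_M : M.natDegree = 2 := by
  unfold M; compute_degree!

theorem M_ne_zero : M ≠ 0 :=
  ne_zero_of_natDegree_gt (n := 0) (by rw [natDegree_M]; exact two_pos)

theorem eval_M (x : ZMod 2) : M.eval x = 1 := by
  obtain rfl | rfl := ZMod.eq_zero_or_eq_one x <;>
    simp only [M, eval_add, eval_pow, eval_X, eval_one] <;> decide

theorem natDegree_one_add_M_mul {Q : (ZMod 2)[X]} (hQ : Q ≠ 0) :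
    (1 + M * Q).natDegree = Q.natDegree + 2 := by
  have hMQ : (M * Q).natDegree = Q.natDegree + 2 := by
    rw [natDegree_mul M_ne_zero hQ, natDegree_M, add_comm]
  rw [natDegree_add_eq_right_of_natDegree_lt (by simp [hMQ]), hMQ]

theorem one_add_M_mul_ne_zero {Q : (ZMod 2)[X]} (hQ : Q ≠ 0) : 1 + M * Q ≠ 0 :=
  ne_zero_of_natDegree_gt (n := 0) (by rw [natDegree_one_add_M_mul hQ]; omega)

theorem isRoot_one_add_M_mul {Q : (ZMod 2)[X]} {x : ZMod 2} (hx : Q.eval x ≠ 0) :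
    (1 + M * Q).IsRoot x := by
  obtain hx1 : Q.eval x = 1 := (ZMod.eq_zero_or_eq_one _).resolve_left hx
  rw [IsRoot.def, eval_add, eval_one, eval_mul, eval_M, hx1]
  decide

section Collatz

variable {A : (ZMod 2)[X]}

theorem collatz_two_mul_add_one (k : ℕ) :
    collatz A (2 * k + 1) = oddPart (collatz A (2 * k)) := by
  simp [collatz]

theorem collatz_two_mul_succ (k : ℕ) :
    collatz A (2 * (k + 1)) = 1 + M * collatz A (2 * k + 1) := by
  simp [collatz, Nat.mul_succ, Nat.add_mod]

theorem collatz_ne_zero (hA : A ≠ 0) (n : ℕ) : collatz A n ≠ 0 := by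
  induction n with
  | zero => exact hA
  | succ n ih =>
    rw [collatz]
    split_ifs
    · exact oddPart_ne_zero ih
    · exact one_add_M_mul_ne_zero ih

theorem rootMultiplicity_collatz_two_mul_succ_pos (hA : A ≠ 0) (k : ℕ) (x : ZMod 2) :
    0 < (collatz A (2 * (k + 1))).rootMultiplicity x := by
  rw [rootMultiplicity_pos (collatz_ne_zero hA _), collatz_two_mul_succ,
    collatz_two_mul_add_one]
  exact isRoot_one_add_M_mul (eval_oddPart_ne_zero (collatz_ne_zero hA _) x)

theorem natDegree_collatz_two_mul_succ (hA : A ≠ 0) (k : ℕ) :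
    (collatz A (2 * (k + 1))).natDegree = (collatz A (2 * k + 1)).natDegree + 2 := by
  rw [collatz_two_mul_succ, natDegree_one_add_M_mul (collatz_ne_zero hA _)]

theorem natDegree_collatz_two_mul_eq (hA : A ≠ 0) (k : ℕ) :
    (collatz A (2 * k)).natDegree =
      aSeq A (2 * k) + bSeq A (2 * k) + (collatz A (2 * k + 1)).natDegree := by
  rw [collatz_two_mul_add_one]
  exact natDegree_eq_add_natDegree_oddPart (collatz_ne_zero hA _)

theorem antitone_natDegree_collatz_odd (hA : A ≠ 0) :
    Antitone fun k => (collatz A (2 * k + 1)).natDegree := by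
  refine antitone_nat_of_succ_le fun k => ?_
  have hdeg := natDegree_collatz_two_mul_succ hA k
  have hsplit := natDegree_collatz_two_mul_eq hA (k + 1)
  have ha : 0 < aSeq A (2 * (k + 1)) := rootMultiplicity_collatz_two_mul_succ_pos hA k 0
  have hb : 0 < bSeq A (2 * (k + 1)) := rootMultiplicity_collatz_two_mul_succ_pos hA k 1
  omega

end Collatz

theorem eventually_constant_degrees (A : Polynomial (ZMod 2)) (hA : A ≠ 0) :
    ∃ m p₁ p₂ : ℕ, 0 < m ∧ p₂ = p₁ + 2 ∧
      ∀ k ≥ m,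
        (collatz A (2 * k + 1)).natDegree = p₁ ∧
        (collatz A (2 * k)).natDegree = p₂ ∧
        aSeq A (2 * k) = 1 ∧ bSeq A (2 * k) = 1 := by
  obtain ⟨m, hm⟩ := WellFoundedLT.antitone_chain_condition (antitone_natDegree_collatz_odd hA)
  refine ⟨m + 1, (collatz A (2 * m + 1)).natDegree, _, m.succ_pos, rfl, fun k hk => ?_⟩
  obtain ⟨j, rfl⟩ : ∃ j, k = j + 1 := ⟨k - 1, by omega⟩
  have hj : _ = (collatz A (2 * j + 1)).natDegree := hm j (by omega)
  have hj1 : _ = (collatz A (2 * (j + 1) + 1)).natDegree := hm (j + 1) (by omega)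
  have hdeg := natDegree_collatz_two_mul_succ hA j
  have hsplit := natDegree_collatz_two_mul_eq hA (j + 1)
  have ha : 0 < aSeq A (2 * (j + 1)) := rootMultiplicity_collatz_two_mul_succ_pos hA j 0
  have hb : 0 < bSeq A (2 * (j + 1)) := rootMultiplicity_collatz_two_mul_succ_pos hA j 1
  exact ⟨hj1.symm, by omega, by omega, by omega⟩
end

section
/- Let r ≥ 1, u ≥ 1 and let A = (M^{2^r} + M^{2^r - 1} + ⋯ + M + 1)^{2^u} = (Σ_{i=0}^{2^r} M^i)^{2^u} in F_2[x]. Then the length ℓ_A equals 2^u·(2^r - 1) + 1. -/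
open Polynomial Finset

/-
Write `B(a, e) = 1 + M^a (M+1)^e`, and note `M + 1 = x(x+1)`. For `e ≥ 1` the polynomial
`B(a, e)` is odd, and `1 + M·B(a, e) = (M+1)·B(a+1, e-1)`; so each round of the Collatz map
trades one factor `M + 1` for a factor `M`, and the odd iterates are `B(a+k, e-k)`, none equal
to `1`. When `e` reaches `0` and `a = 2^n`, the Frobenius identity
`1 + M^(2^n) = (M+1)^(2^n)` makes the last even iterate a power of `x(x+1)`, with odd part `1`.
In characteristic `2`, `∑_{i < 2^r} M^i = (M+1)^(2^r - 1)`, so the given `A` is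
`B(2^u, 2^u (2^r - 1))`, and `2^u + 2^u (2^r - 1) = 2^(u+r)`.
-/

theorem geom_sum_two_pow_eq_add_one_pow {R : Type*} [CommSemiring R] [CharP R 2] (x : R) (r : ℕ) :
    ∑ i ∈ range (2 ^ r), x ^ i = (x + 1) ^ (2 ^ r - 1) := by
  induction r with
  | zero => simp
  | succ r ih =>
    have hpos : 1 ≤ 2 ^ r := Nat.one_le_two_pow
    calc ∑ i ∈ range (2 ^ (r + 1)), x ^ i
        = (x + 1) ^ 2 ^ r * ∑ i ∈ range (2 ^ r), x ^ i := by
          rw [pow_succ, mul_two, sum_range_add, add_pow_char_pow, one_pow, add_mul, one_mul,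
            mul_sum]
          simp only [pow_add]
          ring
      _ = (x + 1) ^ (2 ^ (r + 1) - 1) := by
          rw [ih, ← pow_add, pow_succ]
          congr 1
          omega

theorem X_add_one_ne_zero : (X + 1 : (ZMod 2)[X]) ≠ 0 := by
  simpa using X_add_C_ne_zero (1 : ZMod 2)

theorem M_add_one_eq : M + 1 = X * (X + 1) := by
  rw [M]
  linear_combination (CharTwo.two_eq_zero : (2 : (ZMod 2)[X]) = 0)

theorem M_add_one_ne_zero : M + 1 ≠ 0 := by
  rw [M_add_one_eq]
  exact mul_ne_zero X_ne_zero X_add_one_ne_zero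

theorem eval_M_add_one (z : ZMod 2) : (M + 1).eval z = 0 := by
  rw [M_add_one_eq, eval_mul, eval_add, eval_X, eval_one]
  fin_cases z <;> decide

theorem eval_one_add_mul_M_add_one_pow (P : (ZMod 2)[X]) {e : ℕ} (he : e ≠ 0) (z : ZMod 2) :
    (1 + P * (M + 1) ^ e).eval z = 1 := by
  rw [eval_add, eval_mul, eval_pow, eval_M_add_one, zero_pow he, mul_zero, add_zero, eval_one]

theorem one_add_M_pow_mul_M_add_one_pow_ne_one (a e : ℕ) : 1 + M ^ a * (M + 1) ^ e ≠ 1 := by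
  rw [Ne, add_eq_left]
  exact mul_ne_zero (pow_ne_zero _ M_ne_zero) (pow_ne_zero _ M_add_one_ne_zero)

theorem one_add_M_pow_two_pow (n : ℕ) : 1 + M ^ 2 ^ n = (M + 1) ^ 2 ^ n := by
  rw [add_pow_char_pow, one_pow, add_comm]

theorem collatzLength_eq_of_collatz_eq_one {A : (ZMod 2)[X]} {m : ℕ}
    (hm : collatz A (2 * m + 1) = 1) (hlt : ∀ k < m, collatz A (2 * k + 1) ≠ 1) :
    collatzLength A = m + 1 := by
  rw [collatzLength, Nat.add_right_cancel_iff]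
  exact le_antisymm (Nat.sInf_le hm)
    (le_csInf ⟨m, hm⟩ fun k hk => not_lt.1 fun hkm => hlt k hkm hk)

theorem oddPart_X_pow_mul_X_add_one_pow_mul (a b : ℕ) {Q : (ZMod 2)[X]}
    (h0 : Q.eval 0 = 1) (h1 : Q.eval 1 = 1) :
    oddPart (X ^ a * (X + 1) ^ b * Q) = Q := by
  have hQ : Q ≠ 0 := by rintro rfl; simp at h0
  have ha : (X ^ a * (X + 1) ^ b * Q).rootMultiplicity 0 = a := by
    rw [show X ^ a * (X + 1) ^ b * Q = (X + 1) ^ b * Q * (X - C 0) ^ a by simp; ring,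
      rootMultiplicity_mul_X_sub_C_pow (mul_ne_zero (pow_ne_zero _ X_add_one_ne_zero) hQ),
      rootMultiplicity_eq_zero (by simp [h0]), zero_add]
  have hb : (X ^ a * (X + 1) ^ b * Q).rootMultiplicity 1 = b := by
    rw [show X ^ a * (X + 1) ^ b * Q = X ^ a * Q * (X - C 1) ^ b by
        rw [C_1, CharTwo.sub_eq_add]; ring,
      rootMultiplicity_mul_X_sub_C_pow (mul_ne_zero (pow_ne_zero _ X_ne_zero) hQ),
      rootMultiplicity_eq_zero (by simp [h1]), zero_add]
  rw [oddPart, ha, hb]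
  exact mul_div_cancel_left₀ _ (mul_ne_zero (pow_ne_zero _ X_ne_zero)
    (pow_ne_zero _ X_add_one_ne_zero))

theorem oddPart_M_add_one_pow_mul (c : ℕ) {Q : (ZMod 2)[X]}
    (h0 : Q.eval 0 = 1) (h1 : Q.eval 1 = 1) : oddPart ((M + 1) ^ c * Q) = Q := by
  rw [M_add_one_eq, mul_pow]
  exact oddPart_X_pow_mul_X_add_one_pow_mul c c h0 h1

theorem oddPart_M_add_one_pow (c : ℕ) : oddPart ((M + 1) ^ c) = 1 := by
  simpa using oddPart_M_add_one_pow_mul c (Q := 1) (by simp) (by simp)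

theorem oddPart_one_add_mul_M_add_one_pow (P : (ZMod 2)[X]) {e : ℕ} (he : e ≠ 0) :
    oddPart (1 + P * (M + 1) ^ e) = 1 + P * (M + 1) ^ e := by
  simpa using oddPart_M_add_one_pow_mul 0 (eval_one_add_mul_M_add_one_pow P he 0)
    (eval_one_add_mul_M_add_one_pow P he 1)

theorem collatz_one (A : (ZMod 2)[X]) : collatz A 1 = oddPart A := rfl

theorem collatz_two_mul_succ_add_one (A : (ZMod 2)[X]) (k : ℕ) :
    collatz A (2 * (k + 1) + 1) = oddPart (1 + M * collatz A (2 * k + 1)) := by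
  rw [show 2 * (k + 1) + 1 = 2 * k + 1 + 1 + 1 by ring, collatz, collatz]
  simp [Nat.add_mod]

theorem collatz_two_mul_succ_add_one_of_eq {A : (ZMod 2)[X]} {k a e : ℕ}
    (h : collatz A (2 * k + 1) = 1 + M ^ a * (M + 1) ^ (e + 1)) :
    collatz A (2 * (k + 1) + 1) = oddPart ((M + 1) * (1 + M ^ (a + 1) * (M + 1) ^ e)) := by
  rw [collatz_two_mul_succ_add_one, h]
  congr 1
  ring

theorem collatz_two_mul_succ_add_one_of_eq_of_ne_zero {A : (ZMod 2)[X]} {k a e : ℕ} (he : e ≠ 0)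
    (h : collatz A (2 * k + 1) = 1 + M ^ a * (M + 1) ^ (e + 1)) :
    collatz A (2 * (k + 1) + 1) = 1 + M ^ (a + 1) * (M + 1) ^ e := by
  rw [collatz_two_mul_succ_add_one_of_eq h]
  simpa only [pow_one] using oddPart_M_add_one_pow_mul 1
    (eval_one_add_mul_M_add_one_pow _ he 0) (eval_one_add_mul_M_add_one_pow _ he 1)

theorem collatz_two_mul_add_add_one_of_eq {A : (ZMod 2)[X]} {k a e : ℕ} (he : e ≠ 0) (t : ℕ)
    (h : collatz A (2 * k + 1) = 1 + M ^ a * (M + 1) ^ (e + t)) :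
    collatz A (2 * (k + t) + 1) = 1 + M ^ (a + t) * (M + 1) ^ e := by
  induction t generalizing k a with
  | zero => exact h
  | succ t ih =>
    rw [← add_assoc] at h
    rw [← add_assoc, add_right_comm, ← add_assoc a, add_right_comm a]
    exact ih (collatz_two_mul_succ_add_one_of_eq_of_ne_zero (by omega) h)

theorem collatz_two_mul_succ_add_one_eq_one {A : (ZMod 2)[X]} {k a n : ℕ} (hn : a + 1 = 2 ^ n)
    (h : collatz A (2 * k + 1) = 1 + M ^ a * (M + 1)) :
    collatz A (2 * (k + 1) + 1) = 1 := by
  rw [collatz_two_mul_succ_add_one_of_eq (a := a) (e := 0) (by rwa [zero_add, pow_one]),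
    pow_zero, mul_one, hn, one_add_M_pow_two_pow, ← pow_succ', oddPart_M_add_one_pow]

theorem collatzLength_one_add_M_pow_mul_M_add_one_pow {a e n : ℕ} (h : a + e = 2 ^ n) :
    collatzLength (1 + M ^ a * (M + 1) ^ e) = e + 1 := by
  cases e with
  | zero =>
    obtain rfl : a = 2 ^ n := h
    refine collatzLength_eq_of_collatz_eq_one (m := 0) ?_ (by simp)
    rw [collatz_one, pow_zero, mul_one, one_add_M_pow_two_pow, oddPart_M_add_one_pow]
  | succ t =>
    have hform : ∀ k ≤ t, collatz (1 + M ^ a * (M + 1) ^ (t + 1)) (2 * k + 1) =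
        1 + M ^ (a + k) * (M + 1) ^ (t + 1 - k) := by
      intro k hk
      have hstart : collatz (1 + M ^ a * (M + 1) ^ (t + 1)) (2 * 0 + 1) =
          1 + M ^ a * (M + 1) ^ (t + 1 - k + k) := by
        rw [collatz_one, oddPart_one_add_mul_M_add_one_pow _ t.succ_ne_zero,
          Nat.sub_add_cancel (by omega)]
      simpa using collatz_two_mul_add_add_one_of_eq (by omega : t + 1 - k ≠ 0) k hstart
    refine collatzLength_eq_of_collatz_eq_one ?_ fun k hk => ?_
    · exact collatz_two_mul_succ_add_one_eq_one (by omega) (by simpa using hform t le_rfl)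
    · rw [hform k (by omega)]
      exact one_add_M_pow_mul_M_add_one_pow_ne_one _ _

theorem length_geom_sum_pow_two_powered_general (r u : ℕ)
    (A : Polynomial (ZMod 2))
    (hA : A = (∑ i ∈ Finset.range (2 ^ r + 1), M ^ i) ^ 2 ^ u) :
    collatzLength A = 2 ^ u * (2 ^ r - 1) + 1 := by
  have hA' : A = 1 + M ^ 2 ^ u * (M + 1) ^ (2 ^ u * (2 ^ r - 1)) := by
    rw [hA, geom_sum_succ, geom_sum_two_pow_eq_add_one_pow, add_pow_char_pow, one_pow, mul_pow,
      ← pow_mul]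
    ring
  have hsum : 2 ^ u + 2 ^ u * (2 ^ r - 1) = 2 ^ (u + r) := by
    rw [pow_add, add_comm, ← Nat.mul_add_one, Nat.sub_add_cancel Nat.one_le_two_pow]
  rw [hA']
  exact collatzLength_one_add_M_pow_mul_M_add_one_pow hsum

theorem length_geom_sum_pow_two_powered (r u : ℕ) (hr : 1 ≤ r) (hu : 1 ≤ u)
    (A : Polynomial (ZMod 2))
    (hA : A = (∑ i ∈ Finset.range (2 ^ r + 1), M ^ i) ^ 2 ^ u) :
    collatzLength A = 2 ^ u * (2 ^ r - 1) + 1 :=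
  length_geom_sum_pow_two_powered_general r u A hA
end
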